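/- Every integral moving-phantom mechanism is truthful: for any integral phantom system Φ, any integral profile P, any voter i, and any integral misreport p_i*, the ℓ1 distance from p_i to the outcome on the true profile is at most the ℓ1 distance from p_i to the outcome on the misreported profile. -/

import Mathlib

/-- The median of `2n+1` naturals: the `(n+1)`-st smallest. -/
def medianN (n : ℕ) (v : Fin (2*n+1) → ℕ) : ℕ :=
  (Multiset.sort (Multiset.map v Finset.univ.val) (· ≤ ·)).getD n 0

/-- Merge `n` votes and `n+1` phantoms into one vector of `2n+1` values. -/
def mergeVN (n : ℕ) (x : Fin n → ℕ) (y : Fin (n+1) → ℕ) : Fin (2*n+1) → ℕ :=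
  fun i => if h : (i : ℕ) < n then x ⟨i, h⟩
           else y ⟨(i : ℕ) - n, by have := i.isLt; omega⟩

/-!
A voter whose entry lies strictly below (above) the median of `2n+1` numbers cannot lower
(raise) the median by changing that entry, and raising phantoms only raises medians. Hence if
the misreported profile normalizes later (`τ ≤ τs`), every alternative `j` on which the truthful
outcome `A` overshoots the true vote `p` (`p j < A j`) receives at least as much, `A j ≤ C j`, in
the misreported outcome `C`; the case `τs ≤ τ` is symmetric. Since `A` and `C` have the same sum,
adding the pointwise bound `|p - A| + (A - C) ≤ |p - C|` over `j` gives the claim.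
-/

open Finset

section Median

variable {n : ℕ}

lemma medianN_eq_apply_sort (v : Fin (2*n+1) → ℕ) :
    medianN n v = (v ∘ Tuple.sort v) ⟨n, by omega⟩ := by
  have hsort : Multiset.sort (Multiset.map v univ.val) (· ≤ ·) = List.ofFn (v ∘ Tuple.sort v) := by
    refine List.Perm.eq_of_pairwise' (Multiset.pairwise_sort _ _)
      (Tuple.monotone_sort v).sortedLE_ofFn.pairwise ?_
    rw [← Multiset.coe_eq_coe, Multiset.sort_eq, Fin.univ_val_map, Multiset.coe_eq_coe]
    exact ((Tuple.sort v).ofFn_comp_perm v).symm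
  rw [medianN, hsort, List.getD_eq_getElem _ _ (by rw [List.length_ofFn]; omega),
    List.getElem_ofFn]

lemma card_filter_comp_perm {k : ℕ} (σ : Equiv.Perm (Fin k)) (p : Fin k → Prop)
    [DecidablePred p] : #{i | p (σ i)} = #{i | p i} :=
  card_equiv σ (by simp)

lemma medianN_le_iff (v : Fin (2*n+1) → ℕ) (c : ℕ) :
    medianN n v ≤ c ↔ n < #{i | v i ≤ c} := by
  rw [medianN_eq_apply_sort, ← Tuple.lt_card_le_iff_apply_le_of_monotone (Tuple.monotone_sort v)]
  simp only [Function.comp_apply]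
  rw [card_filter_comp_perm (Tuple.sort v) (v · ≤ c)]

lemma le_medianN_iff (v : Fin (2*n+1) → ℕ) (c : ℕ) :
    c ≤ medianN n v ↔ n < #{i | c ≤ v i} := by
  have hcompl : #{i | v i < c} + #{i | c ≤ v i} = 2*n+1 := by
    simpa [not_lt] using card_filter_add_card_filter_not (s := univ) (fun i => v i < c)
  rw [← not_lt, medianN_eq_apply_sort,
    ← Tuple.lt_card_lt_iff_apply_lt_of_monotone (Tuple.monotone_sort v)]
  simp only [Function.comp_apply]
  rw [card_filter_comp_perm (Tuple.sort v) (v · < c)]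
  omega

lemma medianN_mono : Monotone (medianN n) := fun v w hvw =>
  (le_medianN_iff w _).2 <| ((le_medianN_iff v _).1 le_rfl).trans_le <|
    card_le_card fun i => by simpa using fun h => h.trans (hvw i)

lemma medianN_le_medianN_update (v : Fin (2*n+1) → ℕ) (k : Fin (2*n+1)) (a : ℕ)
    (h : v k < medianN n v) : medianN n v ≤ medianN n (Function.update v k a) :=
  (le_medianN_iff _ _).2 <| ((le_medianN_iff v _).1 le_rfl).trans_le <| card_le_card fun i hi => by
    simp only [mem_filter, mem_univ, true_and] at hi ⊢
    rcases eq_or_ne i k with rfl | hik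
    · omega
    · rwa [Function.update_of_ne hik]

lemma medianN_update_le_medianN (v : Fin (2*n+1) → ℕ) (k : Fin (2*n+1)) (a : ℕ)
    (h : medianN n v < v k) : medianN n (Function.update v k a) ≤ medianN n v :=
  (medianN_le_iff _ _).2 <| ((medianN_le_iff v _).1 le_rfl).trans_le <| card_le_card fun i hi => by
    simp only [mem_filter, mem_univ, true_and] at hi ⊢
    rcases eq_or_ne i k with rfl | hik
    · omega
    · rwa [Function.update_of_ne hik]

end Median

section Merge

variable {n : ℕ}

lemma mergeVN_castLE (x : Fin n → ℕ) (y : Fin (n+1) → ℕ) (i : Fin n) :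
    mergeVN n x y (Fin.castLE (by omega) i) = x i := by
  simp [mergeVN]

lemma mergeVN_update (x : Fin n → ℕ) (y : Fin (n+1) → ℕ) (i : Fin n) (a : ℕ) :
    mergeVN n (Function.update x i a) y =
      Function.update (mergeVN n x y) (Fin.castLE (by omega) i) a := by
  funext k
  by_cases hk : (k : ℕ) < n
  · simp [mergeVN, hk, Function.update_apply, Fin.ext_iff]
  · have hki : k ≠ Fin.castLE (by omega) i := fun h => hk (h ▸ i.isLt)
    simp only [mergeVN, dif_neg hk, Function.update_of_ne hki]

lemma mergeVN_mono (x : Fin n → ℕ) : Monotone (mergeVN n x) := fun y y' hy k => by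
  unfold mergeVN
  split
  · exact le_rfl
  · exact hy _

end Merge

section AbsSub

variable {ι α : Type*} [Fintype ι] [AddCommGroup α] [LinearOrder α] [IsOrderedAddMonoid α]

lemma abs_sub_add_sub_le_abs_sub {p a c : α} (h : p < a → a ≤ c) :
    |p - a| + (a - c) ≤ |p - c| := by
  rcases lt_or_ge p a with hpa | hap
  · calc |p - a| + (a - c) = (a - p) + (a - c) := by rw [abs_sub_comm, abs_of_pos (sub_pos.2 hpa)]
      _ ≤ (c - p) + 0 := add_le_add (sub_le_sub_right (h hpa) p) (sub_nonpos.2 (h hpa))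
      _ ≤ |p - c| := by rw [add_zero, abs_sub_comm]; exact le_abs_self _
  · calc |p - a| + (a - c) = p - c := by rw [abs_of_nonneg (sub_nonneg.2 hap), sub_add_sub_cancel]
      _ ≤ |p - c| := le_abs_self _

lemma sum_abs_sub_le_of_lt_imp_le {p a c : ι → α} (hac : ∑ j, a j = ∑ j, c j)
    (h : ∀ j, p j < a j → a j ≤ c j) : ∑ j, |p j - a j| ≤ ∑ j, |p j - c j| :=
  calc ∑ j, |p j - a j| = ∑ j, (|p j - a j| + (a j - c j)) := by
        rw [sum_add_distrib, sum_sub_distrib, hac, sub_self, add_zero]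
    _ ≤ ∑ j, |p j - c j| := sum_le_sum fun j _ => abs_sub_add_sub_le_abs_sub (h j)

lemma sum_abs_sub_le_of_gt_imp_ge {p a c : ι → α} (hac : ∑ j, a j = ∑ j, c j)
    (h : ∀ j, a j < p j → c j ≤ a j) : ∑ j, |p j - a j| ≤ ∑ j, |p j - c j| := by
  have := sum_abs_sub_le_of_lt_imp_le (p := -p) (a := -a) (c := -c)
    (by simp only [Pi.neg_apply, sum_neg_distrib, hac]) fun j => by simpa using h j
  simp only [Pi.neg_apply, neg_sub_neg] at this
  simpa only [abs_sub_comm (p _)] using this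

end AbsSub

def movingPhantomMedian {n m : ℕ} (φ : Fin (n+1) → Fin m → ℕ → ℕ) (P : Fin n → Fin m → ℕ)
    (t : ℕ) (j : Fin m) : ℕ :=
  medianN n (mergeVN n (fun i => P i j) (fun k => φ k j t))

section MovingPhantom

variable {n m : ℕ} {φ : Fin (n+1) → Fin m → ℕ → ℕ} (P : Fin n → Fin m → ℕ)

lemma movingPhantomMedian_mono (hφ : ∀ k j, Monotone (φ k j)) (j : Fin m) :
    Monotone (movingPhantomMedian φ P · j) := fun _ _ ht =>
  medianN_mono (mergeVN_mono _ fun k => hφ k j ht)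

lemma column_update (i : Fin n) (a : Fin m → ℕ) (j : Fin m) :
    (fun i' => Function.update P i a i' j) = Function.update (fun i' => P i' j) i (a j) := by
  funext i'
  exact Function.apply_update (fun _ g => g j) P i a i'

lemma movingPhantomMedian_le_update {i : Fin n} {t : ℕ} {j : Fin m}
    (h : P i j < movingPhantomMedian φ P t j) (a : Fin m → ℕ) :
    movingPhantomMedian φ P t j ≤ movingPhantomMedian φ (Function.update P i a) t j := by
  unfold movingPhantomMedian at *
  rw [column_update, mergeVN_update]
  exact medianN_le_medianN_update _ _ _ (by rwa [mergeVN_castLE])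

lemma movingPhantomMedian_update_le {i : Fin n} {t : ℕ} {j : Fin m}
    (h : movingPhantomMedian φ P t j < P i j) (a : Fin m → ℕ) :
    movingPhantomMedian φ (Function.update P i a) t j ≤ movingPhantomMedian φ P t j := by
  unfold movingPhantomMedian at *
  rw [column_update, mergeVN_update]
  exact medianN_update_le_medianN _ _ _ (by rwa [mergeVN_castLE])

end MovingPhantom

theorem stmt4_general (n m b : ℕ)
    (φ : Fin (n+1) → Fin m → ℕ → ℕ)
    (hφmono : ∀ k j, Monotone (φ k j))
    (P : Fin n → Fin m → ℕ)
    (i : Fin n) (ps : Fin m → ℕ)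
    (τ τs : ℕ)
    (hnorm : ∑ j, medianN n (mergeVN n (fun i' => P i' j) (fun k => φ k j τ)) = b)
    (hnorms : ∑ j, medianN n
        (mergeVN n (fun i' => Function.update P i ps i' j) (fun k => φ k j τs)) = b) :
    ∑ j, |(P i j : ℤ) -
        (medianN n (mergeVN n (fun i' => P i' j) (fun k => φ k j τ)) : ℤ)| ≤
    ∑ j, |(P i j : ℤ) -
        (medianN n (mergeVN n (fun i' => Function.update P i ps i' j) (fun k => φ k j τs)) : ℤ)| := by
  have hsum : ∑ j, (movingPhantomMedian φ P τ j : ℤ) =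
      ∑ j, (movingPhantomMedian φ (Function.update P i ps) τs j : ℤ) := by
    exact_mod_cast hnorm.trans hnorms.symm
  rcases le_total τ τs with hle | hle
  · refine sum_abs_sub_le_of_lt_imp_le hsum fun j hj => ?_
    exact_mod_cast (movingPhantomMedian_le_update P (by exact_mod_cast hj) ps).trans
      (movingPhantomMedian_mono _ hφmono j hle)
  · refine sum_abs_sub_le_of_gt_imp_ge hsum fun j hj => ?_
    exact_mod_cast (movingPhantomMedian_mono _ hφmono j hle).trans
      (movingPhantomMedian_update_le P (by exact_mod_cast hj) ps)

/-- Every integral moving-phantom mechanism is truthful: for any integral phantom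
system, any integral profile, voter `i`, integral misreport, and any normalization
times for the two profiles, the ℓ1 distance from voter `i`'s true vote to the vector
of medians on the true profile is at most the distance to the vector of medians on
the misreported profile. -/
theorem stmt4 (n m b : ℕ) (hn : 0 < n) (hm : 2 ≤ m) (hb : 0 < b)
    (φ : Fin (n+1) → Fin m → ℕ → ℕ)
    (hφmono : ∀ k j, Monotone (φ k j))
    (hφub : ∀ k j τ, φ k j τ ≤ b)
    (hφ0 : ∀ k j, φ k j 0 = 0)
    (hφz : ∀ k : Fin (n+1), ∀ j, (⌈((b : ℝ) * ((n : ℝ) - (k : ℕ))) / n⌉₊ : ℕ) ≤ φ k j (b*m*(n+1)))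
    (hstep : ∀ τ : ℕ, ∑ k, ∑ j, (φ k j (τ+1) - φ k j τ) ≤ 1)
    (P : Fin n → Fin m → ℕ)
    (hP : ∀ i, (∀ j, P i j ≤ b) ∧ ∑ j, P i j = b)
    (i : Fin n) (ps : Fin m → ℕ)
    (hps : (∀ j, ps j ≤ b) ∧ ∑ j, ps j = b)
    (τ τs : ℕ) (hτ : τ ≤ b*m*(n+1)) (hτs : τs ≤ b*m*(n+1))
    (hnorm : ∑ j, medianN n (mergeVN n (fun i' => P i' j) (fun k => φ k j τ)) = b)
    (hnorms : ∑ j, medianN n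
        (mergeVN n (fun i' => Function.update P i ps i' j) (fun k => φ k j τs)) = b) :
    ∑ j, |(P i j : ℤ) -
        (medianN n (mergeVN n (fun i' => P i' j) (fun k => φ k j τ)) : ℤ)| ≤
    ∑ j, |(P i j : ℤ) -
        (medianN n (mergeVN n (fun i' => Function.update P i ps i' j) (fun k => φ k j τs)) : ℤ)| :=
  stmt4_general n m b φ hφmono P i ps τ τs hnorm hnorms
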